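/- The supremum over α in the open interval (0, 1/2) of the integral ∫₀¹ (u^(−α) − 1)/(1−u)^(α+1) du is finite. -/
import Mathlib


open MeasureTheory

noncomputable def gDom : ℝ → ℝ :=
  fun u => Real.sqrt 2 * (u ^ (-(1/2) : ℝ) + (1 - u) ^ (-(1/2) : ℝ))

lemma gDom_integrable : IntegrableOn gDom (Set.Ioo (0:ℝ) 1) := by
  have h1 : IntervalIntegrable (fun x : ℝ => x ^ (-(1/2) : ℝ)) volume 0 1 :=
    intervalIntegral.intervalIntegrable_rpow' (by norm_num)
  have h2 : IntervalIntegrable (fun x : ℝ => (1 - x) ^ (-(1/2) : ℝ)) volume 0 1 := by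
    have := (intervalIntegral.intervalIntegrable_rpow'
      (r := (-(1/2) : ℝ)) (a := (0:ℝ)) (b := (1:ℝ)) (by norm_num)).comp_sub_left 1
    simpa using this.symm
  have h3 : IntervalIntegrable gDom volume 0 1 := by
    unfold gDom
    exact (h1.add h2).const_mul (Real.sqrt 2)
  have h4 : IntegrableOn gDom (Set.Ioc (0:ℝ) 1) := by
    simpa using (intervalIntegrable_iff_integrableOn_Ioc_of_le (by norm_num)).mp h3
  exact h4.mono_set Set.Ioo_subset_Ioc_self

lemma pointwise_bound {α u : ℝ} (hα : α ∈ Set.Ioo (0:ℝ) (1/2)) (hu : u ∈ Set.Ioo (0:ℝ) 1) :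
    (u ^ (-α) - 1) / (1 - u) ^ (α + 1) ≤ gDom u := by
  obtain ⟨hα0, hα2⟩ := hα
  obtain ⟨hu0, hu1⟩ := hu
  have hv0 : (0:ℝ) < 1 - u := by linarith
  set s := Real.sqrt u with hs
  set t := Real.sqrt (1 - u) with ht
  have hs0 : 0 < s := Real.sqrt_pos.mpr hu0
  have ht0 : 0 < t := Real.sqrt_pos.mpr hv0
  have hs2 : s ^ 2 = u := Real.sq_sqrt hu0.le
  have ht2 : t ^ 2 = 1 - u := Real.sq_sqrt hv0.le
  have hs1 : s ≤ 1 := by nlinarith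
  -- rewrite rpow halves as sqrt inverses
  have hus : u ^ (-(1/2) : ℝ) = s⁻¹ := by
    rw [Real.rpow_neg hu0.le, hs, Real.sqrt_eq_rpow]
  have hvt : (1 - u) ^ (-(1/2) : ℝ) = t⁻¹ := by
    rw [Real.rpow_neg hv0.le, ht, Real.sqrt_eq_rpow]
  -- step A : compare with fixed exponents
  have hA : (u ^ (-α) - 1) / (1 - u) ^ (α + 1) ≤ (s⁻¹ - 1) / ((1 - u) * t) := by
    have hnum : u ^ (-α) - 1 ≤ s⁻¹ - 1 := by
      have := Real.rpow_le_rpow_of_exponent_ge hu0 hu1.le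
        (show (-(1/2) : ℝ) ≤ -α by linarith)
      rw [hus] at this; linarith
    have hden : (1 - u) * t ≤ (1 - u) ^ (α + 1) := by
      have heq : (1 - u) * t = (1 - u) ^ ((3/2 : ℝ)) := by
        rw [show (3/2 : ℝ) = 1 + 1/2 by norm_num, Real.rpow_add hv0, Real.rpow_one,
          ht, Real.sqrt_eq_rpow]
      rw [heq]
      exact Real.rpow_le_rpow_of_exponent_ge hv0 (by linarith) (by linarith)
    have hnum0 : 0 ≤ s⁻¹ - 1 := by
      have : 1 ≤ s⁻¹ := (one_le_inv₀ hs0).mpr hs1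
      linarith
    gcongr
  -- step B : (s⁻¹ - 1)/((1-u)*t) ≤ s⁻¹ * t⁻¹
  have hB : (s⁻¹ - 1) / ((1 - u) * t) ≤ s⁻¹ * t⁻¹ := by
    rw [div_le_iff₀ (by positivity)]
    have hsinv : s⁻¹ * s = 1 := inv_mul_cancel₀ hs0.ne'
    have htinv : t⁻¹ * t = 1 := inv_mul_cancel₀ ht0.ne'
    -- s⁻¹ * t⁻¹ * ((1-u)*t) = s⁻¹ * (1-u) = s⁻¹ - s  (since 1-u = 1-s²)
    have key : s⁻¹ * t⁻¹ * ((1 - u) * t) = s⁻¹ - s := by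
      have : (1 - u) = 1 - s ^ 2 := by rw [hs2]
      rw [this]
      field_simp
    rw [key]
    linarith
  -- step C : s⁻¹ * t⁻¹ ≤ √2 * (s⁻¹ + t⁻¹)
  have hC : s⁻¹ * t⁻¹ ≤ Real.sqrt 2 * (s⁻¹ + t⁻¹) := by
    have hsi0 : 0 ≤ s⁻¹ := by positivity
    have hti0 : 0 ≤ t⁻¹ := by positivity
    rcases le_total u (1/2) with h | h
    · have h12 : (1/2 : ℝ) ≤ 1 - u := by linarith
      have : (Real.sqrt 2)⁻¹ ≤ t := by
        rw [← Real.sqrt_inv]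
        exact Real.sqrt_le_sqrt (by norm_num [h12])
      have ht2' : t⁻¹ ≤ Real.sqrt 2 := by
        rw [← inv_inv (Real.sqrt 2)]
        exact inv_anti₀ (by positivity) this
      nlinarith [mul_le_mul_of_nonneg_left ht2' hsi0]
    · have h12 : (1/2 : ℝ) ≤ u := h
      have : (Real.sqrt 2)⁻¹ ≤ s := by
        rw [← Real.sqrt_inv]
        exact Real.sqrt_le_sqrt (by norm_num [h12])
      have hs2' : s⁻¹ ≤ Real.sqrt 2 := by
        rw [← inv_inv (Real.sqrt 2)]
        exact inv_anti₀ (by positivity) this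
      nlinarith [mul_le_mul_of_nonneg_right hs2' hti0]
  calc (u ^ (-α) - 1) / (1 - u) ^ (α + 1) ≤ (s⁻¹ - 1) / ((1 - u) * t) := hA
    _ ≤ s⁻¹ * t⁻¹ := hB
    _ ≤ Real.sqrt 2 * (s⁻¹ + t⁻¹) := hC
    _ = gDom u := by rw [gDom, hus, hvt]

theorem sup_integral_finite :
    ∃ M : ℝ, ∀ α ∈ Set.Ioo (0:ℝ) (1/2),
      (∫ u in Set.Ioo (0:ℝ) 1, (u ^ (-α) - 1) / (1 - u) ^ (α + 1)) ≤ M := by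
  refine ⟨∫ u in Set.Ioo (0:ℝ) 1, gDom u, fun α hα => ?_⟩
  apply integral_mono_of_nonneg
  · filter_upwards [ae_restrict_mem measurableSet_Ioo] with u hu
    obtain ⟨hu0, hu1⟩ := hu
    have h1 : (1:ℝ) ≤ u ^ (-α) :=
      Real.one_le_rpow_of_pos_of_le_one_of_nonpos hu0 hu1.le (by linarith [hα.1])
    have h2 : (0:ℝ) < (1 - u) ^ (α + 1) := Real.rpow_pos_of_pos (by linarith) _
    exact div_nonneg (by linarith) h2.le
  · exact gDom_integrable
  · filter_upwards [ae_restrict_mem measurableSet_Ioo] with u hu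
    exact pointwise_bound hα hu
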